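/- Let A be a Frobenius algebra (with automorphisms respecting both algebra and coalgebra structure) and H ≤ Aut(A) finite, with P = e∘r as above. Then A_P with product r∘m∘(e⊗e), unit r∘η, coproduct (r⊗r)∘Δ∘e, and counit ε∘e is a Frobenius algebra; e is a morphism of algebras and r is a morphism of coalgebras. -/

import Mathlib

open CategoryTheory MonoidalCategory

/-!
Averaging over `S` (possible as `|S|` is invertible in characteristic zero) gives `P` with
`α ≫ P = P = P ≫ α` for `α ∈ S`, and `P` fixes every morphism into or out of `A` that all
`α ∈ S` fix. So `(e ⊗ e) ≫ m` and `η` are fixed by `P`, i.e. `e` is an algebra map, and dually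
`r` is a coalgebra map; as `e` is mono and `r` is epi, the (co)algebra axioms descend to `A_P`.
For the Frobenius laws, after composing with the split mono `e ⊗ e` the two sides differ only in
carrying `P ⊗ P` or `P` on a single leg after `e ≫ Δ`. These agree because `e ≫ Δ` is invariant
under the diagonal action `α ⊗ α`, which `P` on the other leg absorbs.
-/

section Retract

variable {C : Type*} [Category C] [MonoidalCategory C] {A B : C}

theorem mul_assoc_of_mono {m : A ⊗ A ⟶ A} {mB : B ⊗ B ⟶ B} (e : B ⟶ A) [Mono e]
    (hassoc : (m ▷ A) ≫ m = (α_ A A A).hom ≫ (A ◁ m) ≫ m)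
    (he : mB ≫ e = (e ⊗ₘ e) ≫ m) :
    (mB ▷ B) ≫ mB = (α_ B B B).hom ≫ (B ◁ mB) ≫ mB := by
  rw [← cancel_mono e]
  calc (mB ▷ B ≫ mB) ≫ e = ((e ⊗ₘ e) ⊗ₘ e) ≫ (m ▷ A) ≫ m := by
        simp only [Category.assoc, he, whiskerRight_comp_tensorHom_assoc,
          tensorHom_comp_whiskerRight_assoc]
    _ = (α_ B B B).hom ≫ (e ⊗ₘ e ⊗ₘ e) ≫ (A ◁ m) ≫ m := by
        rw [hassoc, associator_naturality_assoc]
    _ = ((α_ B B B).hom ≫ (B ◁ mB) ≫ mB) ≫ e := by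
        simp only [Category.assoc, he, whiskerLeft_comp_tensorHom_assoc,
          tensorHom_comp_whiskerLeft_assoc]

theorem one_mul_of_mono {m : A ⊗ A ⟶ A} {η : 𝟙_ C ⟶ A} {mB : B ⊗ B ⟶ B} {ηB : 𝟙_ C ⟶ B}
    (e : B ⟶ A) [Mono e] (hlu : (η ▷ A) ≫ m = (λ_ A).hom)
    (he : mB ≫ e = (e ⊗ₘ e) ≫ m) (hη : ηB ≫ e = η) :
    (ηB ▷ B) ≫ mB = (λ_ B).hom := by
  rw [← cancel_mono e]
  calc (ηB ▷ B ≫ mB) ≫ e = (𝟙_ C ◁ e) ≫ (η ▷ A) ≫ m := by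
        rw [Category.assoc, he, whiskerRight_comp_tensorHom_assoc, hη, tensorHom_def'_assoc]
    _ = (λ_ B).hom ≫ e := by rw [hlu, leftUnitor_naturality]

theorem mul_one_of_mono {m : A ⊗ A ⟶ A} {η : 𝟙_ C ⟶ A} {mB : B ⊗ B ⟶ B} {ηB : 𝟙_ C ⟶ B}
    (e : B ⟶ A) [Mono e] (hru : (A ◁ η) ≫ m = (ρ_ A).hom)
    (he : mB ≫ e = (e ⊗ₘ e) ≫ m) (hη : ηB ≫ e = η) :
    (B ◁ ηB) ≫ mB = (ρ_ B).hom := by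
  rw [← cancel_mono e]
  calc (B ◁ ηB ≫ mB) ≫ e = (e ▷ 𝟙_ C) ≫ (A ◁ η) ≫ m := by
        rw [Category.assoc, he, whiskerLeft_comp_tensorHom_assoc, hη, tensorHom_def_assoc]
    _ = (ρ_ B).hom ≫ e := by rw [hru, rightUnitor_naturality]

theorem comul_assoc_of_epi {Δ : A ⟶ A ⊗ A} {ΔB : B ⟶ B ⊗ B} (r : A ⟶ B) [Epi r]
    (hcoassoc : Δ ≫ (Δ ▷ A) ≫ (α_ A A A).hom = Δ ≫ (A ◁ Δ))
    (hr : r ≫ ΔB = Δ ≫ (r ⊗ₘ r)) :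
    ΔB ≫ (ΔB ▷ B) ≫ (α_ B B B).hom = ΔB ≫ (B ◁ ΔB) := by
  rw [← cancel_epi r]
  calc r ≫ ΔB ≫ (ΔB ▷ B) ≫ (α_ B B B).hom
      = Δ ≫ (Δ ▷ A) ≫ (α_ A A A).hom ≫ (r ⊗ₘ r ⊗ₘ r) := by
        rw [reassoc_of% hr, tensorHom_comp_whiskerRight_assoc, hr,
          ← whiskerRight_comp_tensorHom_assoc, associator_naturality]
    _ = r ≫ ΔB ≫ (B ◁ ΔB) := by
        rw [reassoc_of% hcoassoc, reassoc_of% hr, tensorHom_comp_whiskerLeft, hr,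
          whiskerLeft_comp_tensorHom]

theorem counit_comul_of_epi {Δ : A ⟶ A ⊗ A} {ε : A ⟶ 𝟙_ C} {ΔB : B ⟶ B ⊗ B} {εB : B ⟶ 𝟙_ C}
    (r : A ⟶ B) [Epi r] (hlc : Δ ≫ (ε ▷ A) ≫ (λ_ A).hom = 𝟙 A)
    (hr : r ≫ ΔB = Δ ≫ (r ⊗ₘ r)) (hε : r ≫ εB = ε) :
    ΔB ≫ (εB ▷ B) ≫ (λ_ B).hom = 𝟙 B := by
  rw [← cancel_epi r]
  calc r ≫ ΔB ≫ (εB ▷ B) ≫ (λ_ B).hom = Δ ≫ (ε ▷ A) ≫ (𝟙_ C ◁ r) ≫ (λ_ B).hom := by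
        rw [reassoc_of% hr, tensorHom_comp_whiskerRight_assoc, hε, tensorHom_def_assoc]
    _ = r ≫ 𝟙 B := by rw [leftUnitor_naturality, reassoc_of% hlc, Category.comp_id]

theorem comul_counit_of_epi {Δ : A ⟶ A ⊗ A} {ε : A ⟶ 𝟙_ C} {ΔB : B ⟶ B ⊗ B} {εB : B ⟶ 𝟙_ C}
    (r : A ⟶ B) [Epi r] (hrc : Δ ≫ (A ◁ ε) ≫ (ρ_ A).hom = 𝟙 A)
    (hr : r ≫ ΔB = Δ ≫ (r ⊗ₘ r)) (hε : r ≫ εB = ε) :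
    ΔB ≫ (B ◁ εB) ≫ (ρ_ B).hom = 𝟙 B := by
  rw [← cancel_epi r]
  calc r ≫ ΔB ≫ (B ◁ εB) ≫ (ρ_ B).hom = Δ ≫ (A ◁ ε) ≫ (r ▷ 𝟙_ C) ≫ (ρ_ B).hom := by
        rw [reassoc_of% hr, tensorHom_comp_whiskerLeft_assoc, hε, tensorHom_def'_assoc]
    _ = r ≫ 𝟙 B := by rw [rightUnitor_naturality, reassoc_of% hrc, Category.comp_id]

theorem frobenius_left_of_retract {m : A ⊗ A ⟶ A} {Δ : A ⟶ A ⊗ A} {mB : B ⊗ B ⟶ B}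
    {ΔB : B ⟶ B ⊗ B} (e : B ⟶ A) (r : A ⟶ B) (hre : e ≫ r = 𝟙 B)
    (hfrob : (Δ ▷ A) ≫ (α_ A A A).hom ≫ (A ◁ m) = m ≫ Δ)
    (hm : mB ≫ e = (e ⊗ₘ e) ≫ m) (hΔ : ΔB = e ≫ Δ ≫ (r ⊗ₘ r))
    (hswap : e ≫ Δ ≫ ((r ≫ e) ⊗ₘ (r ≫ e)) = e ≫ Δ ≫ ((r ≫ e) ▷ A)) :
    (ΔB ▷ B) ≫ (α_ B B B).hom ≫ (B ◁ mB) = mB ≫ ΔB := by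
  have hΔe : ΔB ≫ (e ⊗ₘ e) = e ≫ Δ ≫ ((r ≫ e) ▷ A) := by
    rw [hΔ, Category.assoc, Category.assoc, tensorHom_comp_tensorHom, hswap]
  have : IsSplitMono (e ⊗ₘ e) :=
    .mk' ⟨r ⊗ₘ r, by rw [tensorHom_comp_tensorHom, hre, id_tensorHom_id]⟩
  rw [← cancel_mono (e ⊗ₘ e)]
  calc ((ΔB ▷ B) ≫ (α_ B B B).hom ≫ (B ◁ mB)) ≫ (e ⊗ₘ e)
      = ((ΔB ≫ (e ⊗ₘ e)) ⊗ₘ e) ≫ (α_ A A A).hom ≫ (A ◁ m) := by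
        rw [Category.assoc, Category.assoc, whiskerLeft_comp_tensorHom, hm,
          ← tensorHom_comp_whiskerLeft, ← associator_naturality_assoc,
          whiskerRight_comp_tensorHom_assoc]
    _ = (e ⊗ₘ e) ≫ ((Δ ▷ A) ≫ (α_ A A A).hom ≫ (A ◁ m)) ≫ ((r ≫ e) ▷ A) := by
        rw [hΔe, ← tensorHom_comp_whiskerRight, comp_whiskerRight, Category.assoc,
          Category.assoc, associator_naturality_left_assoc, ← whisker_exchange]
        simp only [Category.assoc]
    _ = (mB ≫ ΔB) ≫ (e ⊗ₘ e) := by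
        simp only [hfrob, Category.assoc, hΔe, reassoc_of% hm]

theorem frobenius_right_of_retract {m : A ⊗ A ⟶ A} {Δ : A ⟶ A ⊗ A} {mB : B ⊗ B ⟶ B}
    {ΔB : B ⟶ B ⊗ B} (e : B ⟶ A) (r : A ⟶ B) (hre : e ≫ r = 𝟙 B)
    (hfrob : (A ◁ Δ) ≫ (α_ A A A).inv ≫ (m ▷ A) = m ≫ Δ)
    (hm : mB ≫ e = (e ⊗ₘ e) ≫ m) (hΔ : ΔB = e ≫ Δ ≫ (r ⊗ₘ r))
    (hswap : e ≫ Δ ≫ ((r ≫ e) ⊗ₘ (r ≫ e)) = e ≫ Δ ≫ (A ◁ (r ≫ e))) :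
    (B ◁ ΔB) ≫ (α_ B B B).inv ≫ (mB ▷ B) = mB ≫ ΔB := by
  have hΔe : ΔB ≫ (e ⊗ₘ e) = e ≫ Δ ≫ (A ◁ (r ≫ e)) := by
    rw [hΔ, Category.assoc, Category.assoc, tensorHom_comp_tensorHom, hswap]
  have : IsSplitMono (e ⊗ₘ e) :=
    .mk' ⟨r ⊗ₘ r, by rw [tensorHom_comp_tensorHom, hre, id_tensorHom_id]⟩
  rw [← cancel_mono (e ⊗ₘ e)]
  calc ((B ◁ ΔB) ≫ (α_ B B B).inv ≫ (mB ▷ B)) ≫ (e ⊗ₘ e)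
      = (e ⊗ₘ (ΔB ≫ (e ⊗ₘ e))) ≫ (α_ A A A).inv ≫ (m ▷ A) := by
        rw [Category.assoc, Category.assoc, whiskerRight_comp_tensorHom, hm,
          ← tensorHom_comp_whiskerRight, ← associator_inv_naturality_assoc,
          whiskerLeft_comp_tensorHom_assoc]
    _ = (e ⊗ₘ e) ≫ ((A ◁ Δ) ≫ (α_ A A A).inv ≫ (m ▷ A)) ≫ (A ◁ (r ≫ e)) := by
        rw [hΔe, ← tensorHom_comp_whiskerLeft, whiskerLeft_comp, Category.assoc,
          Category.assoc, associator_inv_naturality_right_assoc, whisker_exchange]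
        simp only [Category.assoc]
    _ = (mB ≫ ΔB) ≫ (e ⊗ₘ e) := by
        simp only [hfrob, Category.assoc, hΔe, reassoc_of% hm]

end Retract

theorem inv_card_smul_sum_eq_of_forall_eq (k : Type*) [Field k] [CharZero k] {M ι : Type*}
    [AddCommGroup M] [Module k M] {s : Finset ι} (hs : s.Nonempty) {g : ι → M} {c : M}
    (hg : ∀ i ∈ s, g i = c) : (s.card : k)⁻¹ • ∑ i ∈ s, g i = c := by
  rw [Finset.sum_congr rfl hg, Finset.sum_const, ← Nat.cast_smul_eq_nsmul k,
    inv_smul_smul₀ (Nat.cast_ne_zero.mpr hs.card_ne_zero)]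

section Averaging

variable (k : Type*) [Field k] {C : Type*} [Category C] [Preadditive C] [Linear k C] {A : C}

noncomputable def average (S : Finset (A ⟶ A)) : A ⟶ A := (S.card : k)⁻¹ • ∑ α ∈ S, α

variable {k} {S : Finset (A ⟶ A)}

theorem comp_average_eq_average {α : A ⟶ A} [Epi α] (hmem : ∀ γ ∈ S, α ≫ γ ∈ S) :
    α ≫ average k S = average k S := by
  have hinj : Set.InjOn (α ≫ ·) (S : Set (A ⟶ A)) := fun _ _ _ _ h => cancel_epi α |>.mp h
  rw [average, Linear.comp_smul, Preadditive.comp_sum]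
  congr 1
  exact Finset.sum_nbij (α ≫ ·) hmem hinj (Finset.surjOn_of_injOn_of_card_le _ hmem hinj le_rfl)
    fun _ _ => rfl

theorem average_comp_eq_average {α : A ⟶ A} [Mono α] (hmem : ∀ γ ∈ S, γ ≫ α ∈ S) :
    average k S ≫ α = average k S := by
  have hinj : Set.InjOn (· ≫ α) (S : Set (A ⟶ A)) := fun _ _ _ _ h => cancel_mono α |>.mp h
  rw [average, Linear.smul_comp, Preadditive.sum_comp]
  congr 1
  exact Finset.sum_nbij (· ≫ α) hmem hinj (Finset.surjOn_of_injOn_of_card_le _ hmem hinj le_rfl)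
    fun _ _ => rfl

variable [CharZero k]

theorem comp_average_eq_self {X : C} {f : X ⟶ A} (hS : S.Nonempty)
    (hf : ∀ α ∈ S, f ≫ α = f) : f ≫ average k S = f := by
  rw [average, Linear.comp_smul, Preadditive.comp_sum]
  exact inv_card_smul_sum_eq_of_forall_eq k hS hf

theorem average_comp_eq_self {X : C} {f : A ⟶ X} (hS : S.Nonempty)
    (hf : ∀ α ∈ S, α ≫ f = f) : average k S ≫ f = f := by
  rw [average, Linear.smul_comp, Preadditive.sum_comp]
  exact inv_card_smul_sum_eq_of_forall_eq k hS hf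

variable [MonoidalCategory C]

theorem tensorHom_comp_comp_average_eq_self {B : C} {m : A ⊗ A ⟶ A} {e : B ⟶ A}
    (hS : S.Nonempty) (hm : ∀ α ∈ S, m ≫ α = (α ⊗ₘ α) ≫ m) (he : ∀ α ∈ S, e ≫ α = e) :
    (e ⊗ₘ e) ≫ m ≫ average k S = (e ⊗ₘ e) ≫ m := by
  rw [← Category.assoc]
  refine comp_average_eq_self hS fun α hα => ?_
  rw [Category.assoc, hm α hα, ← Category.assoc, tensorHom_comp_tensorHom, he α hα]

theorem average_comp_comp_tensorHom_eq_self {B : C} {Δ : A ⟶ A ⊗ A} {r : A ⟶ B}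
    (hS : S.Nonempty) (hΔ : ∀ α ∈ S, α ≫ Δ = Δ ≫ (α ⊗ₘ α)) (hr : ∀ α ∈ S, α ≫ r = r) :
    average k S ≫ Δ ≫ (r ⊗ₘ r) = Δ ≫ (r ⊗ₘ r) :=
  average_comp_eq_self hS fun α hα => by
    rw [reassoc_of% (hΔ α hα), tensorHom_comp_tensorHom, hr α hα]

variable [MonoidalPreadditive C] [MonoidalLinear k C]

theorem comp_average_tensorHom_average_eq_whiskerRight {X : C} {f : X ⟶ A ⊗ A}
    (hS : S.Nonempty) (hP : ∀ α ∈ S, α ≫ average k S = average k S)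
    (hf : ∀ α ∈ S, f ≫ (α ⊗ₘ α) = f) :
    f ≫ (average k S ⊗ₘ average k S) = f ≫ (average k S ▷ A) := by
  have hwhisker : A ◁ average k S = (S.card : k)⁻¹ • ∑ α ∈ S, A ◁ α := by
    rw [average, MonoidalLinear.whiskerLeft_smul, whiskerLeft_sum]
  rw [MonoidalCategory.tensorHom_def, ← Category.assoc, hwhisker, Linear.comp_smul,
    Preadditive.comp_sum]
  refine inv_card_smul_sum_eq_of_forall_eq k hS fun α hα => ?_
  calc (f ≫ average k S ▷ A) ≫ A ◁ α = f ≫ ((α ≫ average k S) ⊗ₘ α) := by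
        rw [hP α hα, Category.assoc, MonoidalCategory.tensorHom_def]
    _ = f ≫ average k S ▷ A := by
        rw [← tensorHom_comp_whiskerRight, reassoc_of% (hf α hα)]

theorem comp_average_tensorHom_average_eq_whiskerLeft {X : C} {f : X ⟶ A ⊗ A}
    (hS : S.Nonempty) (hP : ∀ α ∈ S, α ≫ average k S = average k S)
    (hf : ∀ α ∈ S, f ≫ (α ⊗ₘ α) = f) :
    f ≫ (average k S ⊗ₘ average k S) = f ≫ (A ◁ average k S) := by
  have hwhisker : average k S ▷ A = (S.card : k)⁻¹ • ∑ α ∈ S, α ▷ A := by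
    rw [average, MonoidalLinear.smul_whiskerRight, sum_whiskerRight]
  rw [MonoidalCategory.tensorHom_def', ← Category.assoc, hwhisker, Linear.comp_smul,
    Preadditive.comp_sum]
  refine inv_card_smul_sum_eq_of_forall_eq k hS fun α hα => ?_
  calc (f ≫ A ◁ average k S) ≫ α ▷ A = f ≫ (α ⊗ₘ (α ≫ average k S)) := by
        rw [hP α hα, Category.assoc, MonoidalCategory.tensorHom_def']
    _ = f ≫ A ◁ average k S := by
        rw [← tensorHom_comp_whiskerLeft, reassoc_of% (hf α hα)]

end Averaging

theorem fixed_algebra_is_frobenius_general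
    {k : Type*} [Field k] [CharZero k] {C : Type*} [Category C] [MonoidalCategory C]
    [Abelian C] [Linear k C] [MonoidalPreadditive C] [MonoidalLinear k C]
    (A : C) (m : A ⊗ A ⟶ A) (η : 𝟙_ C ⟶ A) (Δ : A ⟶ A ⊗ A) (ε : A ⟶ 𝟙_ C)
    (hassoc : (m ▷ A) ≫ m = (α_ A A A).hom ≫ (A ◁ m) ≫ m)
    (hlu : (η ▷ A) ≫ m = (λ_ A).hom)
    (hru : (A ◁ η) ≫ m = (ρ_ A).hom)
    (hcoassoc : Δ ≫ (Δ ▷ A) ≫ (α_ A A A).hom = Δ ≫ (A ◁ Δ))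
    (hlc : Δ ≫ (ε ▷ A) ≫ (λ_ A).hom = 𝟙 A)
    (hrc : Δ ≫ (A ◁ ε) ≫ (ρ_ A).hom = 𝟙 A)
    (hfrob1 : (Δ ▷ A) ≫ (α_ A A A).hom ≫ (A ◁ m) = m ≫ Δ)
    (hfrob2 : (A ◁ Δ) ≫ (α_ A A A).inv ≫ (m ▷ A) = m ≫ Δ)
    (S : Finset (A ⟶ A))
    -- elements of S are automorphisms of A as a Frobenius algebra
    (halg : ∀ α ∈ S, m ≫ α = (α ⊗ₘ α) ≫ m ∧ η ≫ α = η ∧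
      α ≫ Δ = Δ ≫ (α ⊗ₘ α) ∧ α ≫ ε = ε ∧ IsIso α)
    (hid : 𝟙 A ∈ S)
    (hcomp : ∀ α ∈ S, ∀ β ∈ S, α ≫ β ∈ S)
    (P : A ⟶ A) (hP : P = (S.card : k)⁻¹ • ∑ α ∈ S, α)
    (AP : C) (e : AP ⟶ A) (r : A ⟶ AP) [Mono e] [Epi r]
    (hfact : P = r ≫ e) (hre : e ≫ r = 𝟙 AP) :
    ∀ (mP : AP ⊗ AP ⟶ AP) (ηP : 𝟙_ C ⟶ AP) (ΔP : AP ⟶ AP ⊗ AP) (εP : AP ⟶ 𝟙_ C),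
      mP = (e ⊗ₘ e) ≫ m ≫ r → ηP = η ≫ r →
      ΔP = e ≫ Δ ≫ (r ⊗ₘ r) → εP = e ≫ ε →
      -- algebra axioms
      ((mP ▷ AP) ≫ mP = (α_ AP AP AP).hom ≫ (AP ◁ mP) ≫ mP) ∧
      ((ηP ▷ AP) ≫ mP = (λ_ AP).hom) ∧
      ((AP ◁ ηP) ≫ mP = (ρ_ AP).hom) ∧
      -- coalgebra axioms
      (ΔP ≫ (ΔP ▷ AP) ≫ (α_ AP AP AP).hom = ΔP ≫ (AP ◁ ΔP)) ∧
      (ΔP ≫ (εP ▷ AP) ≫ (λ_ AP).hom = 𝟙 AP) ∧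
      (ΔP ≫ (AP ◁ εP) ≫ (ρ_ AP).hom = 𝟙 AP) ∧
      -- Frobenius property
      ((ΔP ▷ AP) ≫ (α_ AP AP AP).hom ≫ (AP ◁ mP) = mP ≫ ΔP) ∧
      ((AP ◁ ΔP) ≫ (α_ AP AP AP).inv ≫ (mP ▷ AP) = mP ≫ ΔP) ∧
      -- e is a morphism of algebras, r a morphism of coalgebras
      (mP ≫ e = (e ⊗ₘ e) ≫ m) ∧ (ηP ≫ e = η) ∧
      (r ≫ ΔP = Δ ≫ (r ⊗ₘ r)) ∧ (r ≫ εP = ε) := by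
  intro mP ηP ΔP εP hmP hηP hΔP hεP
  obtain rfl : P = average k S := hP
  have hS : S.Nonempty := ⟨_, hid⟩
  have hαP : ∀ α ∈ S, α ≫ average k S = average k S := fun α hα =>
    have := (halg α hα).2.2.2.2; comp_average_eq_average (hcomp α hα)
  have hPα : ∀ α ∈ S, average k S ≫ α = average k S := fun α hα =>
    have := (halg α hα).2.2.2.2; average_comp_eq_average fun γ hγ => hcomp γ hγ α hα
  have he : ∀ α ∈ S, e ≫ α = e := fun α hα => by
    simpa only [hfact, Category.assoc, reassoc_of% hre] using e ≫= hPα α hα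
  have hr : ∀ α ∈ S, α ≫ r = r := fun α hα => by
    simpa only [hfact, Category.assoc, hre, Category.comp_id] using hαP α hα =≫ r
  have hm : mP ≫ e = (e ⊗ₘ e) ≫ m := by
    rw [hmP, Category.assoc, Category.assoc, ← hfact]
    exact tensorHom_comp_comp_average_eq_self hS (fun α hα => (halg α hα).1) he
  have hη : ηP ≫ e = η := by
    rw [hηP, Category.assoc, ← hfact]
    exact comp_average_eq_self hS fun α hα => (halg α hα).2.1
  have hΔ : r ≫ ΔP = Δ ≫ (r ⊗ₘ r) := by
    rw [hΔP, ← Category.assoc, ← hfact]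
    exact average_comp_comp_tensorHom_eq_self hS (fun α hα => (halg α hα).2.2.1) hr
  have hε : r ≫ εP = ε := by
    rw [hεP, ← Category.assoc, ← hfact]
    exact average_comp_eq_self hS fun α hα => (halg α hα).2.2.2.1
  have hdiag : ∀ α ∈ S, (e ≫ Δ) ≫ (α ⊗ₘ α) = e ≫ Δ := fun α hα => by
    rw [Category.assoc, ← (halg α hα).2.2.1, reassoc_of% (he α hα)]
  have hswapR := comp_average_tensorHom_average_eq_whiskerRight hS hαP hdiag
  have hswapL := comp_average_tensorHom_average_eq_whiskerLeft hS hαP hdiag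
  simp only [hfact, Category.assoc] at hswapR hswapL
  exact ⟨mul_assoc_of_mono e hassoc hm, one_mul_of_mono e hlu hm hη,
    mul_one_of_mono e hru hm hη, comul_assoc_of_epi r hcoassoc hΔ,
    counit_comul_of_epi r hlc hΔ hε, comul_counit_of_epi r hrc hΔ hε,
    frobenius_left_of_retract e r hre hfrob1 hm hΔP hswapR,
    frobenius_right_of_retract e r hre hfrob2 hm hΔP hswapL, hm, hη, hΔ, hε⟩

/-- Let `A` be a Frobenius algebra (with automorphisms respecting both the algebra and
the coalgebra structure) and `S ≤ Aut(A)` finite, with `P = e ∘ r` as before.  Then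
`A_P` with product `r∘m∘(e⊗e)`, unit `r∘η`, coproduct `(r⊗r)∘Δ∘e` and counit `ε∘e` is
a Frobenius algebra; `e` is a morphism of algebras and `r` is a morphism of
coalgebras. -/
theorem fixed_algebra_is_frobenius
    {k : Type*} [Field k] [CharZero k] {C : Type*} [Category C] [MonoidalCategory C]
    [Abelian C] [Linear k C] [MonoidalPreadditive C] [MonoidalLinear k C]
    (A : C) (m : A ⊗ A ⟶ A) (η : 𝟙_ C ⟶ A) (Δ : A ⟶ A ⊗ A) (ε : A ⟶ 𝟙_ C)
    (hassoc : (m ▷ A) ≫ m = (α_ A A A).hom ≫ (A ◁ m) ≫ m)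
    (hlu : (η ▷ A) ≫ m = (λ_ A).hom)
    (hru : (A ◁ η) ≫ m = (ρ_ A).hom)
    (hcoassoc : Δ ≫ (Δ ▷ A) ≫ (α_ A A A).hom = Δ ≫ (A ◁ Δ))
    (hlc : Δ ≫ (ε ▷ A) ≫ (λ_ A).hom = 𝟙 A)
    (hrc : Δ ≫ (A ◁ ε) ≫ (ρ_ A).hom = 𝟙 A)
    (hfrob1 : (Δ ▷ A) ≫ (α_ A A A).hom ≫ (A ◁ m) = m ≫ Δ)
    (hfrob2 : (A ◁ Δ) ≫ (α_ A A A).inv ≫ (m ▷ A) = m ≫ Δ)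
    (S : Finset (A ⟶ A))
    -- elements of S are automorphisms of A as a Frobenius algebra
    (halg : ∀ α ∈ S, m ≫ α = (α ⊗ₘ α) ≫ m ∧ η ≫ α = η ∧
      α ≫ Δ = Δ ≫ (α ⊗ₘ α) ∧ α ≫ ε = ε ∧ IsIso α)
    (hid : 𝟙 A ∈ S)
    (hcomp : ∀ α ∈ S, ∀ β ∈ S, α ≫ β ∈ S)
    (hinv : ∀ α ∈ S, ∃ β ∈ S, α ≫ β = 𝟙 A ∧ β ≫ α = 𝟙 A)
    (P : A ⟶ A) (hP : P = (S.card : k)⁻¹ • ∑ α ∈ S, α)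
    (AP : C) (e : AP ⟶ A) (r : A ⟶ AP) [Mono e] [Epi r]
    (hfact : P = r ≫ e) (hre : e ≫ r = 𝟙 AP) :
    ∀ (mP : AP ⊗ AP ⟶ AP) (ηP : 𝟙_ C ⟶ AP) (ΔP : AP ⟶ AP ⊗ AP) (εP : AP ⟶ 𝟙_ C),
      mP = (e ⊗ₘ e) ≫ m ≫ r → ηP = η ≫ r →
      ΔP = e ≫ Δ ≫ (r ⊗ₘ r) → εP = e ≫ ε →
      -- algebra axioms
      ((mP ▷ AP) ≫ mP = (α_ AP AP AP).hom ≫ (AP ◁ mP) ≫ mP) ∧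
      ((ηP ▷ AP) ≫ mP = (λ_ AP).hom) ∧
      ((AP ◁ ηP) ≫ mP = (ρ_ AP).hom) ∧
      -- coalgebra axioms
      (ΔP ≫ (ΔP ▷ AP) ≫ (α_ AP AP AP).hom = ΔP ≫ (AP ◁ ΔP)) ∧
      (ΔP ≫ (εP ▷ AP) ≫ (λ_ AP).hom = 𝟙 AP) ∧
      (ΔP ≫ (AP ◁ εP) ≫ (ρ_ AP).hom = 𝟙 AP) ∧
      -- Frobenius property
      ((ΔP ▷ AP) ≫ (α_ AP AP AP).hom ≫ (AP ◁ mP) = mP ≫ ΔP) ∧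
      ((AP ◁ ΔP) ≫ (α_ AP AP AP).inv ≫ (mP ▷ AP) = mP ≫ ΔP) ∧
      -- e is a morphism of algebras, r a morphism of coalgebras
      (mP ≫ e = (e ⊗ₘ e) ≫ m) ∧ (ηP ≫ e = η) ∧
      (r ≫ ΔP = Δ ≫ (r ⊗ₘ r)) ∧ (r ≫ εP = ε) :=
  fixed_algebra_is_frobenius_general A m η Δ ε hassoc hlu hru hcoassoc hlc hrc hfrob1 hfrob2 S halg
    hid hcomp P hP AP e r hfact hre
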